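/- (Theorem 7.2, facet count) The number of distinct linear functionals in the family {L_{w,i} : w ∈ W, 1 ≤ i ≤ d} equals Σ_{i=1}^d |W| / |W_{[d]∖N(i)}|, where W_{[d]∖N(i)} is the parabolic subgroup of W generated by {s_k : k ∉ N(i)}. In particular this is the number of facets of the Φ-submodular cone. -/

import Mathlib

open scoped RealInnerProductSpace Pointwise

section Defs

variable {V : Type*} [NormedAddCommGroup V] [InnerProductSpace ℝ V]

/-- The reflection `s_α(x) = x - (2⟨x,α⟩/⟨α,α⟩) α`. -/
noncomputable def reflFormula (α x : V) : V :=
  x - ((2 * ⟪x, α⟫) / ⟪α, α⟫) • α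

/-- `g` is the reflection across the hyperplane orthogonal to `α`. -/
def IsReflection (g : V ≃ₗ[ℝ] V) (α : V) : Prop :=
  ∀ x, g x = reflFormula α x

/-- A finite root system in `V`: a finite spanning set of nonzero vectors, whose only scalar
multiples in `Φ` are `±α`, stable under each reflection `s_α`. -/
structure IsRootSystem (Φ : Set V) : Prop where
  finite : Φ.Finite
  spans : Submodule.span ℝ Φ = ⊤
  ne_zero : ∀ α ∈ Φ, α ≠ 0
  smul_mem : ∀ α ∈ Φ, ∀ c : ℝ, c • α ∈ Φ → c = 1 ∨ c = -1
  refl_maps : ∀ α ∈ Φ, reflFormula α '' Φ = Φ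

/-- The Weyl group of `Φ`: the subgroup of `GL(V)` generated by the reflections `s_α`, `α ∈ Φ`. -/
noncomputable def weylGroup (Φ : Set V) : Subgroup (V ≃ₗ[ℝ] V) :=
  Subgroup.closure {g | ∃ α ∈ Φ, IsReflection g α}

/-- `a 0, …, a (d-1)` is a system of simple roots of `Φ`: a basis of `V` contained in `Φ` such
that every root is a combination of the `a i` with all coefficients `≥ 0` or all `≤ 0`. -/
structure IsSimpleSystem (Φ : Set V) {d : ℕ} (a : Fin d → V) : Prop where
  mem : ∀ i, a i ∈ Φ
  indep : LinearIndependent ℝ a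
  spans : Submodule.span ℝ (Set.range a) = ⊤
  sign : ∀ β ∈ Φ, ∃ c : Fin d → ℝ,
    ((∀ i, 0 ≤ c i) ∨ (∀ i, c i ≤ 0)) ∧ β = ∑ i, c i • a i

/-- The coroot `α^∨ = 2α/⟨α,α⟩`. -/
noncomputable def coroot (α : V) : V := (2 / ⟪α, α⟫) • α

/-- Cartan matrix entry `A_{ij} = ⟨α_i^∨, α_j⟩`. -/
noncomputable def cartan {d : ℕ} (a : Fin d → V) (i j : Fin d) : ℝ :=
  ⟪coroot (a i), a j⟫

/-- `N(i) = {j ≠ i : ⟨α_i, α_j⟩ ≠ 0}`, the neighbours of `i` in the Dynkin diagram. -/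
noncomputable def Nset {d : ℕ} (a : Fin d → V) (i : Fin d) : Finset (Fin d) :=
  Finset.univ.filter fun j => j ≠ i ∧ ⟪a i, a j⟫ ≠ 0

/-- The set `R = W{λ_1, …, λ_d}` of the conjugates of the fundamental weights. -/
def weightConjugates (Φ : Set V) {d : ℕ} (lam : Fin d → V) : Set V :=
  {x | ∃ w ∈ weylGroup Φ, ∃ i, x = w (lam i)}

/-- `h` satisfies the local Φ-submodular inequalities
`h(wλ_i) + h(w s_i λ_i) ≥ Σ_{j ∈ N(i)} (−A_{ji}) h(wλ_j)`. -/
noncomputable def SatisfiesLocal (Φ : Set V) {d : ℕ} (a lam : Fin d → V) (h : V → ℝ) : Prop :=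
  ∀ w ∈ weylGroup Φ, ∀ i : Fin d,
    h (w (lam i)) + h (w (reflFormula (a i) (lam i))) ≥
      ∑ j ∈ Nset a i, (-(cartan a j i)) * h (w (lam j))

/-- `F` is a face of `P`: the set of points of `P` maximizing `⟨u, ·⟩` for some `u ∈ V`. -/
def IsFaceOf (P F : Set V) : Prop :=
  ∃ u : V, F = {v ∈ P | ∀ x ∈ P, ⟪u, x⟫ ≤ ⟪u, v⟫}

end Defs

/-- A polytope: the convex hull of a nonempty finite subset. -/
def IsPolytope {V : Type*} [AddCommGroup V] [Module ℝ V] (P : Set V) : Prop :=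
  ∃ S : Finset V, S.Nonempty ∧ P = convexHull ℝ (S : Set V)

/-- The linear functional `L_{w,i}` on `ℝ^R` given by
`L_{w,i}(h) = h(wλ_i) + h(w s_i λ_i) − Σ_{j∈N(i)} (−A_{ji}) h(wλ_j)`. -/
noncomputable def Lfun {V : Type*} [NormedAddCommGroup V] [InnerProductSpace ℝ V]
    {d : ℕ} (a lam : Fin d → V) (w : V ≃ₗ[ℝ] V) (i : Fin d) (h : V → ℝ) : ℝ :=
  h (w (lam i)) + h (w (reflFormula (a i) (lam i))) -
    ∑ j ∈ Nset a i, (-(cartan a j i)) * h (w (lam j))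

/-- The parabolic subgroup `W_I` generated by the simple reflections `{s_k : k ∈ I}`. -/
noncomputable def parabolic {V : Type*} [NormedAddCommGroup V] [InnerProductSpace ℝ V]
    {d : ℕ} (a : Fin d → V) (I : Set (Fin d)) : Subgroup (V ≃ₗ[ℝ] V) :=
  Subgroup.closure {g | ∃ k ∈ I, IsReflection g (a k)}


section Dev
open scoped Classical
variable {V : Type*} [NormedAddCommGroup V] [InnerProductSpace ℝ V]
lemma inner_self_ne (α : V) (hα : α ≠ 0) : ⟪α, α⟫ ≠ 0 :=
  fun h => hα ((inner_self_eq_zero (𝕜 := ℝ)).mp h)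

lemma inner_self_pos (α : V) (hα : α ≠ 0) : (0:ℝ) < ⟪α, α⟫ :=
  lt_of_le_of_ne real_inner_self_nonneg (Ne.symm (inner_self_ne α hα))

lemma inner_reflFormula (α : V) (hα : α ≠ 0) (x : V) :
    ⟪reflFormula α x, α⟫ = -⟪x, α⟫ := by
  have h := inner_self_ne α hα
  rw [reflFormula, inner_sub_left, real_inner_smul_left]
  field_simp; ring

lemma reflFormula_involutive (α : V) (hα : α ≠ 0) (x : V) :
    reflFormula α (reflFormula α x) = x := by
  conv_lhs => rw [reflFormula, inner_reflFormula α hα x]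
  rw [reflFormula]
  have : (2 * -⟪x,α⟫ / ⟪α,α⟫) = -(2 * ⟪x,α⟫ / ⟪α,α⟫) := by ring
  rw [this, neg_smul, sub_neg_eq_add, sub_add_cancel]

lemma reflFormula_inner (α : V) (hα : α ≠ 0) (x y : V) :
    ⟪reflFormula α x, reflFormula α y⟫ = ⟪x, y⟫ := by
  have h := inner_self_ne α hα
  simp only [reflFormula, inner_sub_left, inner_sub_right, real_inner_smul_left,
    real_inner_smul_right, real_inner_comm α x, real_inner_comm α y]
  field_simp; ring

lemma reflFormula_self (α : V) (hα : α ≠ 0) : reflFormula α α = -α := by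
  have h := inner_self_ne α hα
  rw [reflFormula]
  rw [show 2 * ⟪α,α⟫ / ⟪α,α⟫ = 2 by field_simp]
  rw [show ((2:ℝ)) • α = α + α from two_smul ℝ α]
  abel

lemma reflFormula_of_inner_zero (α x : V) (hx : ⟪x, α⟫ = 0) : reflFormula α x = x := by
  simp [reflFormula, hx]

lemma reflFormula_neg (α x : V) : reflFormula (-α) x = reflFormula α x := by
  simp only [reflFormula, inner_neg_right, inner_neg_left, neg_neg, smul_neg]
  rw [show 2 * -⟪x,α⟫ / ⟪α,α⟫ = -(2*⟪x,α⟫/⟪α,α⟫) by ring, neg_smul, neg_neg]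

lemma reflFormula_add (α : V) (x y : V) :
    reflFormula α (x + y) = reflFormula α x + reflFormula α y := by
  simp only [reflFormula, inner_add_left]
  rw [show (2 * (⟪x,α⟫ + ⟪y,α⟫) / ⟪α,α⟫) = 2*⟪x,α⟫/⟪α,α⟫ + 2*⟪y,α⟫/⟪α,α⟫ by ring, add_smul]
  abel

lemma reflFormula_smul (α : V) (c : ℝ) (x : V) :
    reflFormula α (c • x) = c • reflFormula α x := by
  simp only [reflFormula, real_inner_smul_left, smul_sub, smul_smul]
  congr 1
  rw [show (2 * (c * ⟪x,α⟫) / ⟪α,α⟫) = c * (2*⟪x,α⟫/⟪α,α⟫) by ring]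

/-- the reflection as a linear equivalence -/
noncomputable def reflEquiv (α : V) (hα : α ≠ 0) : V ≃ₗ[ℝ] V :=
  LinearEquiv.ofInvolutive
    { toFun := reflFormula α
      map_add' := reflFormula_add α
      map_smul' := reflFormula_smul α } (reflFormula_involutive α hα)

lemma reflEquiv_isReflection (α : V) (hα : α ≠ 0) : IsReflection (reflEquiv α hα) α :=
  fun _ => rfl

lemma IsReflection.unique {g g' : V ≃ₗ[ℝ] V} {α : V} (h : IsReflection g α)
    (h' : IsReflection g' α) : g = g' := by
  ext x; rw [h x, h' x]




variable {Φ : Set V}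

/-- a reflection is an involution -/
lemma IsReflection.mul_self {g : V ≃ₗ[ℝ] V} {α : V} (hα : α ≠ 0) (h : IsReflection g α) :
    g * g = 1 := by
  ext x
  show g (g x) = x
  rw [h, h, reflFormula_involutive α hα]

lemma IsReflection.inv_eq {g : V ≃ₗ[ℝ] V} {α : V} (hα : α ≠ 0) (h : IsReflection g α) :
    g⁻¹ = g := by
  rw [inv_eq_iff_mul_eq_one, h.mul_self hα]


/-- elements of the Weyl group preserve the inner product -/
lemma weyl_inner (hΦ : IsRootSystem Φ) {w : V ≃ₗ[ℝ] V} (hw : w ∈ weylGroup Φ) (x y : V) :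
    ⟪w x, w y⟫ = ⟪x, y⟫ := by
  revert x y
  induction hw using Subgroup.closure_induction with
  | one => simp
  | mul u v hu hv pu pv =>
      intro x y
      exact (pu (v x) (v y)).trans (pv x y)
  | inv u hu pu =>
      intro x y
      rw [← pu (u⁻¹ x) (u⁻¹ y)]
      congr 1 <;> exact u.apply_symm_apply _
  | mem g hg =>
      intro x y
      obtain ⟨α, hαΦ, hg⟩ := hg
      rw [hg, hg, reflFormula_inner α (hΦ.ne_zero α hαΦ)]

/-- elements of the Weyl group preserve Φ -/
lemma weyl_maps (hΦ : IsRootSystem Φ) {w : V ≃ₗ[ℝ] V} (hw : w ∈ weylGroup Φ) {β : V} (hβ : β ∈ Φ) : w β ∈ Φ := by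
  revert β
  suffices h : (∀ β ∈ Φ, w β ∈ Φ) ∧ (∀ β ∈ Φ, w⁻¹ β ∈ Φ) from fun β hβ => h.1 β hβ
  induction hw using Subgroup.closure_induction with
  | one => simp
  | mul u v hu hv pu pv =>
      refine ⟨fun β hβ => pu.1 _ (pv.1 β hβ), fun β hβ => ?_⟩
      rw [mul_inv_rev]
      exact pv.2 _ (pu.2 β hβ)
  | inv u hu pu =>
      refine ⟨pu.2, fun β hβ => ?_⟩
      rw [inv_inv]
      exact pu.1 β hβ
  | mem g hg =>
      obtain ⟨α, hαΦ, hg⟩ := hg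
      have h1 : ∀ β ∈ Φ, g β ∈ Φ := by
        intro β hβ
        rw [hg]
        rw [← hΦ.refl_maps α hαΦ]
        exact Set.mem_image_of_mem _ hβ
      rw [hg.inv_eq (hΦ.ne_zero α hαΦ)]
      exact ⟨h1, h1⟩



variable {d : ℕ} {a : Fin d → V}

/-- rewrite the reflection using the coroot pairing -/
lemma reflFormula_eq_coroot (α : V) (x : V) :
    reflFormula α x = x - ⟪x, coroot α⟫ • α := by
  rw [reflFormula, coroot, real_inner_smul_right]
  congr 2
  ring

lemma inner_coroot_comm (α x : V) : ⟪x, coroot α⟫ = ⟪coroot α, x⟫ := real_inner_comm _ _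

/-- conjugation of reflections -/
lemma IsReflection.conj {g s : V ≃ₗ[ℝ] V} {α : V} (hα : α ≠ 0) (hs : IsReflection s α)
    (hg : ∀ x y, ⟪g x, g y⟫ = ⟪x, y⟫) : IsReflection (g * s * g⁻¹) (g α) := by
  intro x
  have hinv : ∀ z, g (g⁻¹ z) = z := fun z => g.apply_symm_apply z
  show g (s (g⁻¹ x)) = _
  have h1 : ⟪x, g α⟫ = ⟪g⁻¹ x, α⟫ := by rw [← hinv x, hg (g⁻¹ x) α, hinv]
  have h2 : ⟪g α, g α⟫ = ⟪α, α⟫ := hg α α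
  rw [hs, reflFormula, map_sub, map_smul, hinv, reflFormula, h1, h2]



lemma a_ne_zero (hΦ : IsRootSystem Φ) (ha : IsSimpleSystem Φ a) (i : Fin d) : a i ≠ 0 := hΦ.ne_zero _ (ha.mem i)

lemma neg_mem (hΦ : IsRootSystem Φ) (β : V) (hβ : β ∈ Φ) : -β ∈ Φ := by
  rw [← reflFormula_self β (hΦ.ne_zero β hβ), ← hΦ.refl_maps β hβ]
  exact Set.mem_image_of_mem _ hβ

/-- the basis of simple roots -/
noncomputable def simpleBasis (ha : IsSimpleSystem Φ a) : Module.Basis (Fin d) ℝ V :=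
  Module.Basis.mk ha.indep (by rw [ha.spans])

lemma simpleBasis_eq (ha : IsSimpleSystem Φ a) : ⇑(simpleBasis ha) = a := Module.Basis.coe_mk _ _

/-- positive roots -/
def Pos (ha : IsSimpleSystem Φ a) : Set V :=
  {β | β ∈ Φ ∧ ∀ j, 0 ≤ (simpleBasis ha).repr β j}

lemma repr_of_sum (ha : IsSimpleSystem Φ a) (c : Fin d → ℝ) : ∀ j, (simpleBasis ha).repr (∑ i, c i • a i) j = c j := by
  intro j
  have : (∑ i, c i • a i) = ∑ i, c i • (simpleBasis ha) i := by rw [simpleBasis_eq ha]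
  rw [this]
  simp [Finsupp.single_apply]

lemma pos_or_neg (hΦ : IsRootSystem Φ) (ha : IsSimpleSystem Φ a) {β : V} (hβ : β ∈ Φ) : β ∈ Pos ha ∨ -β ∈ Pos ha := by
  obtain ⟨c, hc, hsum⟩ := ha.sign β hβ
  rcases hc with hc | hc
  · left
    refine ⟨hβ, fun j => ?_⟩
    rw [hsum, repr_of_sum ha c j]
    exact hc j
  · right
    refine ⟨neg_mem hΦ β hβ, fun j => ?_⟩
    rw [map_neg]
    have : (simpleBasis ha).repr β j = c j := by rw [hsum, repr_of_sum ha c j]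
    simp only [Finsupp.coe_neg, Pi.neg_apply, this]
    linarith [hc j]

lemma pos_not_neg (hΦ : IsRootSystem Φ) (ha : IsSimpleSystem Φ a) {β : V} (hβ : β ∈ Pos ha) : ¬(-β ∈ Pos ha) := by
  rintro ⟨-, hneg⟩
  have hzero : β = 0 := by
    have : ∀ j, (simpleBasis ha).repr β j = 0 := by
      intro j
      have h1 := hβ.2 j
      have h2 := hneg j
      rw [map_neg] at h2
      simp only [Finsupp.coe_neg, Pi.neg_apply] at h2
      linarith
    have : (simpleBasis ha).repr β = 0 := Finsupp.ext this
    exact (simpleBasis ha).repr.map_eq_zero_iff.mp this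
  exact hΦ.ne_zero β hβ.1 hzero

lemma a_mem_pos (ha : IsSimpleSystem Φ a) (i : Fin d) : a i ∈ Pos ha := by
  refine ⟨ha.mem i, fun j => ?_⟩
  have : a i = (simpleBasis ha) i := by rw [simpleBasis_eq ha]
  rw [this, Module.Basis.repr_self]
  rcases eq_or_ne i j with rfl | hne
  · simp
  · simp [Finsupp.single_apply, hne]

/-- Cartan matrix basics -/
lemma cartan_eq (i j : Fin d) : cartan a i j = 2 * ⟪a j, a i⟫ / ⟪a i, a i⟫ := by
  rw [cartan, coroot, real_inner_smul_left, real_inner_comm (a j) (a i)]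
  ring

lemma cartan_diag (hΦ : IsRootSystem Φ) (ha : IsSimpleSystem Φ a) (i : Fin d) : cartan a i i = 2 := by
  rw [cartan_eq]
  field_simp [inner_self_ne (a i) (a_ne_zero hΦ ha i)]
  exact div_self (inner_self_ne (a i) (a_ne_zero hΦ ha i))

lemma inner_coroot_eq_cartan (i j : Fin d) : ⟪a j, coroot (a i)⟫ = cartan a i j := by
  rw [inner_coroot_comm, cartan]

lemma reflFormula_a (i : Fin d) (x : V) :
    reflFormula (a i) x = x - ⟪x, coroot (a i)⟫ • a i := reflFormula_eq_coroot _ _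

lemma cartan_zero_iff (hΦ : IsRootSystem Φ) (ha : IsSimpleSystem Φ a) (i j : Fin d) : cartan a i j = 0 ↔ ⟪a i, a j⟫ = 0 := by
  rw [cartan_eq]
  constructor
  · intro h
    rw [div_eq_zero_iff] at h
    rcases h with h | h
    · rw [real_inner_comm]; linarith
    · exact absurd h (inner_self_ne (a i) (a_ne_zero hΦ ha i))
  · intro h
    rw [real_inner_comm] at h
    rw [h]
    ring_nf

lemma cartan_offdiag (hΦ : IsRootSystem Φ) (ha : IsSimpleSystem Φ a) {i j : Fin d} (hij : i ≠ j) : cartan a i j ≤ 0 := by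
  have hγΦ : reflFormula (a i) (a j) ∈ Φ := by
    rw [← hΦ.refl_maps (a i) (ha.mem i)]
    exact Set.mem_image_of_mem _ (ha.mem j)
  have hγ : reflFormula (a i) (a j) = ∑ k, ((if k = j then 1 else 0) +
      (if k = i then -cartan a i j else 0)) • a k := by
    rw [reflFormula_a, inner_coroot_eq_cartan]
    rw [show (∑ k, ((if k = j then (1:ℝ) else 0) + (if k = i then -cartan a i j else 0)) • a k)
      = (∑ k, (if k = j then (1:ℝ) else 0) • a k) + ∑ k, (if k = i then -cartan a i j else 0) • a k
      by rw [← Finset.sum_add_distrib]; congr 1; ext k; rw [add_smul]]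
    simp [Finset.sum_ite_eq', sub_eq_add_neg]
  rcases pos_or_neg hΦ ha hγΦ with hp | hn
  · have := hp.2 i
    rw [hγ, repr_of_sum ha _ i] at this
    rw [if_neg hij, if_pos rfl] at this
    linarith
  · exfalso
    have := hn.2 j
    have hrepr : (simpleBasis ha).repr (-reflFormula (a i) (a j)) j = -1 := by
      rw [map_neg]
      simp only [Finsupp.coe_neg, Pi.neg_apply]
      rw [hγ, repr_of_sum ha _ j]
      rw [if_pos rfl, if_neg (Ne.symm hij)]
      ring
    rw [hrepr] at this
    linarith

lemma mem_Nset {i j : Fin d} : j ∈ Nset a i ↔ j ≠ i ∧ ⟪a i, a j⟫ ≠ 0 := by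
  simp [Nset]

lemma cartan_neg_of_mem_Nset (hΦ : IsRootSystem Φ) (ha : IsSimpleSystem Φ a) {i j : Fin d} (h : j ∈ Nset a i) : cartan a j i < 0 := by
  obtain ⟨hne, hinner⟩ := (mem_Nset (a := a)).mp h
  have h1 : cartan a j i ≤ 0 := cartan_offdiag hΦ ha hne
  have h2 : cartan a j i ≠ 0 := by
    rw [Ne, cartan_zero_iff hΦ ha]
    rw [real_inner_comm]
    exact hinner
  exact lt_of_le_of_ne h1 h2

lemma cartan_zero_of_not_mem (hΦ : IsRootSystem Φ) (ha : IsSimpleSystem Φ a) {i k : Fin d} (hki : k ≠ i) (hk : k ∉ Nset a i) :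
    cartan a k i = 0 := by
  rw [cartan_zero_iff hΦ ha]
  rw [mem_Nset] at hk
  push_neg at hk
  rw [real_inner_comm]
  exact hk hki


-- ### Section E : words, deletion, chamber theorem
/-- dominance with respect to the simple roots -/
def Dominant (a : Fin d → V) (x : V) : Prop := ∀ i : Fin d, 0 ≤ ⟪x, a i⟫

variable (hΦ : IsRootSystem Φ) (ha : IsSimpleSystem Φ a)
include hΦ ha

/-- the simple reflection `s_i` -/
noncomputable def sref (i : Fin d) : V ≃ₗ[ℝ] V := reflEquiv (a i) (a_ne_zero hΦ ha i)

lemma sref_isRefl (i : Fin d) : IsReflection (sref hΦ ha i) (a i) :=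
  reflEquiv_isReflection _ _

lemma sref_apply (i : Fin d) (x : V) : sref hΦ ha i x = reflFormula (a i) x :=
  sref_isRefl hΦ ha i x

lemma sref_mul_self (i : Fin d) : sref hΦ ha i * sref hΦ ha i = 1 :=
  (sref_isRefl hΦ ha i).mul_self (a_ne_zero hΦ ha i)

lemma sref_mem (i : Fin d) : sref hΦ ha i ∈ weylGroup Φ :=
  Subgroup.subset_closure ⟨a i, ha.mem i, sref_isRefl hΦ ha i⟩

/-- product of a word of simple reflections -/
noncomputable def wordProd (l : List (Fin d)) : V ≃ₗ[ℝ] V := (l.map (sref hΦ ha)).prod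

lemma wordProd_nil : wordProd hΦ ha [] = 1 := rfl

lemma wordProd_cons (i : Fin d) (l : List (Fin d)) :
    wordProd hΦ ha (i :: l) = sref hΦ ha i * wordProd hΦ ha l := by
  simp [wordProd]

lemma wordProd_singleton (i : Fin d) : wordProd hΦ ha [i] = sref hΦ ha i := by
  simp [wordProd]

lemma wordProd_append (l1 l2 : List (Fin d)) :
    wordProd hΦ ha (l1 ++ l2) = wordProd hΦ ha l1 * wordProd hΦ ha l2 := by
  simp [wordProd]

lemma wordProd_mem (l : List (Fin d)) : wordProd hΦ ha l ∈ weylGroup Φ := by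
  induction l with
  | nil => exact one_mem _
  | cons i t ih =>
      rw [wordProd_cons]
      exact mul_mem (sref_mem hΦ ha i) ih

lemma wordProd_inv (l : List (Fin d)) :
    (wordProd hΦ ha l)⁻¹ = wordProd hΦ ha l.reverse := by
  induction l with
  | nil => simp [wordProd]
  | cons i t ih =>
      rw [wordProd_cons, mul_inv_rev, ih, List.reverse_cons, wordProd_append,
        wordProd_singleton, (sref_isRefl hΦ ha i).inv_eq (a_ne_zero hΦ ha i)]

lemma exists_word_of_mem_closure {w : V ≃ₗ[ℝ] V}
    (hw : w ∈ Subgroup.closure {g | ∃ i : Fin d, IsReflection g (a i)}) :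
    ∃ l, w = wordProd hΦ ha l := by
  induction hw using Subgroup.closure_induction with
  | one => exact ⟨[], rfl⟩
  | mul u v hu hv pu pv =>
      obtain ⟨l1, rfl⟩ := pu
      obtain ⟨l2, rfl⟩ := pv
      exact ⟨l1 ++ l2, (wordProd_append hΦ ha l1 l2).symm⟩
  | inv u hu pu =>
      obtain ⟨l, rfl⟩ := pu
      exact ⟨l.reverse, wordProd_inv hΦ ha l⟩
  | mem g hg =>
      obtain ⟨i, hgi⟩ := hg
      exact ⟨[i], by rw [wordProd_singleton, hgi.unique (sref_isRefl hΦ ha i)]⟩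

lemma wordProd_mem_simple (l : List (Fin d)) :
    wordProd hΦ ha l ∈ Subgroup.closure {g | ∃ i : Fin d, IsReflection g (a i)} := by
  induction l with
  | nil => exact one_mem _
  | cons i' t ih =>
      rw [wordProd_cons]
      exact mul_mem (Subgroup.subset_closure ⟨i', sref_isRefl hΦ ha i'⟩) ih

/-- a positive root has some positive coordinate away from `i`, unless it is `a i` -/
lemma exists_pos_coord {β : V} {i : Fin d} (hβ : β ∈ Pos ha) (hne : β ≠ a i) :
    ∃ j, j ≠ i ∧ 0 < (simpleBasis ha).repr β j := by
  by_contra h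
  push_neg at h
  have hz : ∀ j, j ≠ i → (simpleBasis ha).repr β j = 0 :=
    fun j hj => le_antisymm (h j hj) (hβ.2 j)
  have hsum := (simpleBasis ha).sum_repr β
  rw [Finset.sum_eq_single i (fun j _ hj => by rw [hz j hj, zero_smul])
    (fun hi => absurd (Finset.mem_univ i) hi)] at hsum
  rw [show (simpleBasis ha) i = a i from congrFun (simpleBasis_eq ha) i] at hsum
  have hmem : (simpleBasis ha).repr β i • a i ∈ Φ := by rw [hsum]; exact hβ.1
  rcases hΦ.smul_mem (a i) (ha.mem i) _ hmem with h1 | h1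
  · exact hne (by rw [← hsum, h1, one_smul])
  · have := hβ.2 i
    rw [h1] at this
    linarith

/-- `s_i` maps positive roots other than `a i` to positive roots -/
lemma refl_pos {β : V} {i : Fin d} (hβ : β ∈ Pos ha) (hne : β ≠ a i) :
    reflFormula (a i) β ∈ Pos ha := by
  have hγΦ : reflFormula (a i) β ∈ Φ := by
    rw [← hΦ.refl_maps (a i) (ha.mem i)]
    exact Set.mem_image_of_mem _ hβ.1
  obtain ⟨j0, hj0, hj0pos⟩ := exists_pos_coord hΦ ha hβ hne
  rcases pos_or_neg hΦ ha hγΦ with hp | hn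
  · exact hp
  · exfalso
    have hai : (simpleBasis ha).repr (a i) j0 = 0 := by
      rw [show a i = (simpleBasis ha) i from (congrFun (simpleBasis_eq ha) i).symm,
        Module.Basis.repr_self, Finsupp.single_apply, if_neg (fun hh => hj0 hh.symm)]
    have hrepr : (simpleBasis ha).repr (reflFormula (a i) β) j0 =
        (simpleBasis ha).repr β j0 := by
      rw [reflFormula_eq_coroot, map_sub, map_smul]
      simp only [Finsupp.coe_sub, Pi.sub_apply, Finsupp.coe_smul, Pi.smul_apply, smul_eq_mul]
      rw [hai, mul_zero, sub_zero]
    have hcontr := hn.2 j0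
    rw [map_neg] at hcontr
    simp only [Finsupp.coe_neg, Pi.neg_apply] at hcontr
    rw [hrepr] at hcontr
    linarith

/-- the height of a root -/
noncomputable def htf (β : V) : ℝ := ∑ j, (simpleBasis ha).repr β j

/-- every positive root is a Weyl conjugate of a simple root -/
lemma pos_root_word {β : V} (hβ : β ∈ Pos ha) :
    ∃ (l : List (Fin d)) (i : Fin d), β = wordProd hΦ ha l (a i) := by
  set Orb : Set V := {δ | δ ∈ Pos ha ∧ ∃ l, wordProd hΦ ha l δ = β} with hOrb
  have hfin : Orb.Finite := hΦ.finite.subset (fun δ hδ => hδ.1.1)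
  have hnem : Orb.Nonempty := ⟨β, hβ, [], rfl⟩
  obtain ⟨δ, hδOrb, hmin⟩ := Set.exists_min_image Orb (htf ha) hfin hnem
  obtain ⟨hδpos, l, hl⟩ := hδOrb
  have hδ0 : δ ≠ 0 := hΦ.ne_zero δ hδpos.1
  have hip : (0:ℝ) < ⟪δ, δ⟫ := inner_self_pos δ hδ0
  have hexpand : ∑ j, (simpleBasis ha).repr δ j • a j = δ := by
    have h := (simpleBasis ha).sum_repr δ
    simpa only [simpleBasis_eq ha] using h
  have hsum : ⟪δ, δ⟫ = ∑ j, (simpleBasis ha).repr δ j * ⟪δ, a j⟫ := by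
    conv_lhs => rw [← hexpand]
    rw [sum_inner]
    exact Finset.sum_congr rfl fun j _ => by
      rw [real_inner_smul_left, hexpand, real_inner_comm (a j) δ]
  have hex : ∃ i, 0 < (simpleBasis ha).repr δ i * ⟪δ, a i⟫ := by
    by_contra h
    push_neg at h
    have : ⟪δ, δ⟫ ≤ 0 := hsum ▸ Finset.sum_nonpos (fun j _ => h j)
    linarith
  obtain ⟨i, hi⟩ := hex
  have hinner_pos : 0 < ⟪δ, a i⟫ := by
    rcases lt_or_ge 0 ⟪δ, a i⟫ with h | h
    · exact h
    · nlinarith [hδpos.2 i]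
  by_cases heq : δ = a i
  · exact ⟨l, i, by rw [← hl, heq]⟩
  · exfalso
    have hδ'pos : reflFormula (a i) δ ∈ Pos ha := refl_pos hΦ ha hδpos heq
    have horb' : reflFormula (a i) δ ∈ Orb := by
      refine ⟨hδ'pos, l ++ [i], ?_⟩
      rw [wordProd_append, wordProd_singleton]
      show wordProd hΦ ha l (sref hΦ ha i (reflFormula (a i) δ)) = β
      rw [sref_apply, reflFormula_involutive (a i) (a_ne_zero hΦ ha i), hl]
    have hco : 0 < ⟪δ, coroot (a i)⟫ := by
      rw [coroot, real_inner_smul_right]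
      have hsp : (0:ℝ) < ⟪a i, a i⟫ := inner_self_pos (a i) (a_ne_zero hΦ ha i)
      positivity
    have hlt : htf ha (reflFormula (a i) δ) < htf ha δ := by
      have hrw : ∀ j, (simpleBasis ha).repr (reflFormula (a i) δ) j =
          (simpleBasis ha).repr δ j - ⟪δ, coroot (a i)⟫ * (if i = j then 1 else 0) := by
        intro j
        rw [reflFormula_eq_coroot, map_sub, map_smul]
        simp only [Finsupp.coe_sub, Pi.sub_apply, Finsupp.coe_smul, Pi.smul_apply, smul_eq_mul]
        congr 2
        rw [show a i = (simpleBasis ha) i from (congrFun (simpleBasis_eq ha) i).symm,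
          Module.Basis.repr_self, Finsupp.single_apply]
      have h1 : htf ha (reflFormula (a i) δ) = htf ha δ - ⟪δ, coroot (a i)⟫ := by
        unfold htf
        rw [Finset.sum_congr rfl (fun j _ => hrw j), Finset.sum_sub_distrib]
        congr 1
        rw [← Finset.mul_sum, Finset.sum_ite_eq Finset.univ i (fun _ => (1:ℝ))]
        simp
      linarith
    exact absurd (hmin _ horb') (not_le.mpr hlt)

/-- the Weyl group is generated by the simple reflections -/
lemma weyl_le_simple :
    weylGroup Φ ≤ Subgroup.closure {g | ∃ i : Fin d, IsReflection g (a i)} := by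
  rw [weylGroup, Subgroup.closure_le]
  rintro g ⟨β, hβΦ, hgβ⟩
  have key : ∀ γ : V, γ ∈ Pos ha → IsReflection g γ →
      g ∈ Subgroup.closure {g | ∃ i : Fin d, IsReflection g (a i)} := by
    intro γ hγpos hgγ
    obtain ⟨l, i, hγ⟩ := pos_root_word hΦ ha hγpos
    have hconj : IsReflection
        (wordProd hΦ ha l * sref hΦ ha i * (wordProd hΦ ha l)⁻¹) (wordProd hΦ ha l (a i)) :=
      IsReflection.conj (a_ne_zero hΦ ha i) (sref_isRefl hΦ ha i)
        (weyl_inner hΦ (wordProd_mem hΦ ha l))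
    rw [← hγ] at hconj
    rw [hgγ.unique hconj]
    have hwmem := wordProd_mem_simple hΦ ha l
    exact mul_mem (mul_mem hwmem
      (Subgroup.subset_closure ⟨i, sref_isRefl hΦ ha i⟩)) (inv_mem hwmem)
  rcases pos_or_neg hΦ ha hβΦ with hp | hn
  · exact key β hp hgβ
  · exact key (-β) hn (fun x => by rw [hgβ x, ← reflFormula_neg])

lemma weyl_word {w : V ≃ₗ[ℝ] V} (hw : w ∈ weylGroup Φ) : ∃ l, w = wordProd hΦ ha l :=
  exists_word_of_mem_closure hΦ ha (weyl_le_simple hΦ ha hw)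

lemma inner_nonneg_of_dominant {x β : V} (hx : Dominant a x) (hβ : β ∈ Pos ha) :
    0 ≤ ⟪x, β⟫ := by
  have hexpand : ∑ j, (simpleBasis ha).repr β j • a j = β := by
    have h := (simpleBasis ha).sum_repr β
    simpa only [simpleBasis_eq ha] using h
  rw [← hexpand, inner_sum]
  refine Finset.sum_nonneg (fun j _ => ?_)
  rw [real_inner_smul_right]
  exact mul_nonneg (hβ.2 j) (hx j)

/-- the deletion lemma -/
lemma deletion : ∀ (l : List (Fin d)) (j : Fin d), (wordProd hΦ ha l) (a j) ∉ Pos ha →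
    ∃ l', l'.length + 1 = l.length ∧ wordProd hΦ ha l' = wordProd hΦ ha l * sref hΦ ha j := by
  intro l
  induction l with
  | nil =>
      intro j hj
      exact absurd (a_mem_pos ha j) (by simpa [wordProd] using hj)
  | cons i t IH =>
      intro j hj
      rw [wordProd_cons] at hj
      by_cases hu : wordProd hΦ ha t (a j) ∈ Pos ha
      · by_cases heq : wordProd hΦ ha t (a j) = a i
        · refine ⟨t, by simp, ?_⟩
          have hconj : IsReflection
              (wordProd hΦ ha t * sref hΦ ha j * (wordProd hΦ ha t)⁻¹)
              (wordProd hΦ ha t (a j)) :=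
            IsReflection.conj (a_ne_zero hΦ ha j) (sref_isRefl hΦ ha j)
              (weyl_inner hΦ (wordProd_mem hΦ ha t))
          rw [heq] at hconj
          have hs : sref hΦ ha i =
              wordProd hΦ ha t * sref hΦ ha j * (wordProd hΦ ha t)⁻¹ :=
            (sref_isRefl hΦ ha i).unique hconj
          rw [wordProd_cons, hs,
            mul_assoc (wordProd hΦ ha t * sref hΦ ha j) _ _, inv_mul_cancel, mul_one,
            mul_assoc, sref_mul_self, mul_one]
        · exfalso
          apply hj
          have happ : (sref hΦ ha i * wordProd hΦ ha t) (a j) =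
              reflFormula (a i) (wordProd hΦ ha t (a j)) := by
            show sref hΦ ha i (wordProd hΦ ha t (a j)) = _
            rw [sref_apply]
          rw [happ]
          exact refl_pos hΦ ha hu heq
      · obtain ⟨t', hlen, hprod⟩ := IH j hu
        refine ⟨i :: t', by simp [← hlen], ?_⟩
        rw [wordProd_cons, hprod, wordProd_cons, mul_assoc]

/-- the chamber theorem, word version -/
lemma chamber_aux : ∀ n : ℕ, ∀ l : List (Fin d), l.length ≤ n → ∀ x y : V,
    Dominant a x → Dominant a y → wordProd hΦ ha l x = y →
    x = y ∧ wordProd hΦ ha l ∈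
      Subgroup.closure {g | ∃ k, ⟪x, a k⟫ = 0 ∧ IsReflection g (a k)} := by
  intro n
  induction n with
  | zero =>
      intro l hl x y hx hy hxy
      have hnil : l = [] := List.eq_nil_of_length_eq_zero (Nat.le_zero.mp hl)
      subst hnil
      have hxyeq : x = y := hxy
      exact ⟨hxyeq, one_mem _⟩
  | succ n IH =>
      intro l hl x y hx hy hxy
      rcases List.eq_nil_or_concat l with rfl | ⟨t, j, rfl⟩
      · exact ⟨hxy, one_mem _⟩
      · simp only [List.concat_eq_append] at hl hxy ⊢
        have hlt : t.length ≤ n := by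
          simp only [List.length_append, List.length_singleton] at hl
          omega
        have hw : wordProd hΦ ha (t ++ [j]) = wordProd hΦ ha t * sref hΦ ha j := by
          rw [wordProd_append, wordProd_singleton]
        by_cases hposj : wordProd hΦ ha (t ++ [j]) (a j) ∈ Pos ha
        · by_cases hpt : wordProd hΦ ha t (a j) ∈ Pos ha
          · exfalso
            have hneg : wordProd hΦ ha (t ++ [j]) (a j) = -(wordProd hΦ ha t (a j)) := by
              rw [hw]
              show wordProd hΦ ha t (sref hΦ ha j (a j)) = _
              rw [sref_apply, reflFormula_self (a j) (a_ne_zero hΦ ha j), map_neg]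
            rw [hneg] at hposj
            exact pos_not_neg hΦ ha hpt hposj
          · obtain ⟨t', hlen', hprod'⟩ := deletion hΦ ha t j hpt
            have hw' : wordProd hΦ ha t' = wordProd hΦ ha (t ++ [j]) := by
              rw [hprod', ← hw]
            have hlen'' : t'.length ≤ n := by omega
            obtain ⟨h1, h2⟩ := IH t' hlen'' x y hx hy (by rw [hw']; exact hxy)
            exact ⟨h1, by rw [← hw']; exact h2⟩
        · have hΦj : wordProd hΦ ha (t ++ [j]) (a j) ∈ Φ :=
            weyl_maps hΦ (wordProd_mem hΦ ha _) (ha.mem j)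
          have hneg : -(wordProd hΦ ha (t ++ [j]) (a j)) ∈ Pos ha :=
            (pos_or_neg hΦ ha hΦj).resolve_left hposj
          have hinner : ⟪x, a j⟫ = 0 := by
            have h1 : ⟪x, a j⟫ = ⟪wordProd hΦ ha (t ++ [j]) x,
                wordProd hΦ ha (t ++ [j]) (a j)⟫ :=
              (weyl_inner hΦ (wordProd_mem hΦ ha _) x (a j)).symm
            have h2 : 0 ≤ ⟪y, -(wordProd hΦ ha (t ++ [j]) (a j))⟫ :=
              inner_nonneg_of_dominant hΦ ha hy hneg
            rw [inner_neg_right] at h2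
            rw [hxy] at h1
            have h4 := hx j
            linarith
          have hsx : sref hΦ ha j x = x := by
            rw [sref_apply]
            exact reflFormula_of_inner_zero _ _ hinner
          have hty : wordProd hΦ ha t x = y := by
            have h5 : wordProd hΦ ha (t ++ [j]) x = wordProd hΦ ha t (sref hΦ ha j x) := by
              rw [hw]; rfl
            rw [hsx] at h5
            rw [← hxy, h5]
          obtain ⟨h1, h2⟩ := IH t hlt x y hx hy hty
          refine ⟨h1, ?_⟩
          rw [hw]
          exact mul_mem h2 (Subgroup.subset_closure ⟨j, hinner, sref_isRefl hΦ ha j⟩)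

/-- the chamber theorem -/
theorem chamber {w : V ≃ₗ[ℝ] V} (hw : w ∈ weylGroup Φ) {x y : V}
    (hx : Dominant a x) (hy : Dominant a y) (hxy : w x = y) :
    x = y ∧ w ∈ Subgroup.closure {g | ∃ k, ⟪x, a k⟫ = 0 ∧ IsReflection g (a k)} := by
  obtain ⟨l, rfl⟩ := weyl_word hΦ ha hw
  exact chamber_aux hΦ ha l.length l le_rfl x y hx hy hxy


-- ### Section F : finiteness, weights, the dominant vector z_i

lemma weyl_ext {w w' : V ≃ₗ[ℝ] V} (h : ∀ β ∈ Φ, w β = w' β) : w = w' := by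
  ext x
  have hx : x ∈ Submodule.span ℝ Φ := by rw [hΦ.spans]; exact Submodule.mem_top
  induction hx using Submodule.span_induction with
  | mem z hz => exact h z hz
  | zero => rw [map_zero, map_zero]
  | add y z _ _ hy hz => rw [map_add, map_add, hy, hz]
  | smul c y _ hy => rw [map_smul, map_smul, hy]

lemma weyl_finite : Finite ↥(weylGroup Φ) := by
  haveI := hΦ.finite.to_subtype
  refine Finite.of_injective
    (fun w : ↥(weylGroup Φ) => (fun β : ↥Φ => (⟨w.1 β.1, weyl_maps hΦ w.2 β.2⟩ : ↥Φ))) ?_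
  intro w w' h
  refine Subtype.ext (weyl_ext hΦ ha (fun β hβ => ?_))
  exact congrArg Subtype.val (congrFun h ⟨β, hβ⟩)

variable {lam : Fin d → V}
variable (hlam : ∀ i j, ⟪lam i, coroot (a j)⟫ = if i = j then (1 : ℝ) else 0)
include hlam

lemma inner_lam_a_ne {i j : Fin d} (h : i ≠ j) : ⟪lam i, a j⟫ = 0 := by
  have h0 := hlam i j
  rw [if_neg h, coroot, real_inner_smul_right] at h0
  have hs : (2:ℝ)/⟪a j, a j⟫ ≠ 0 :=
    div_ne_zero two_ne_zero (inner_self_ne _ (a_ne_zero hΦ ha j))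
  exact (mul_eq_zero.mp h0).resolve_left hs

lemma inner_lam_self (i : Fin d) : ⟪lam i, a i⟫ = ⟪a i, a i⟫ / 2 := by
  have h0 := hlam i i
  rw [if_pos rfl, coroot, real_inner_smul_right] at h0
  have hs : ⟪a i, a i⟫ ≠ 0 := inner_self_ne _ (a_ne_zero hΦ ha i)
  field_simp at h0
  linarith

lemma lam_dominant (i : Fin d) : Dominant a (lam i) := by
  intro j
  rcases eq_or_ne i j with rfl | h
  · rw [inner_lam_self hΦ ha hlam]
    have := real_inner_self_nonneg (x := a i)
    linarith
  · rw [inner_lam_a_ne hΦ ha hlam h]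

lemma refl_lam_self (i : Fin d) : reflFormula (a i) (lam i) = lam i - a i := by
  rw [reflFormula_eq_coroot, hlam i i, if_pos rfl, one_smul]

lemma refl_lam_ne {i j : Fin d} (h : i ≠ j) : reflFormula (a j) (lam i) = lam i := by
  rw [reflFormula_eq_coroot, hlam i j, if_neg h, zero_smul, sub_zero]

lemma lam_sub_coroot (i k : Fin d) :
    ⟪lam i - a i, coroot (a k)⟫ = (if i = k then 1 else 0) - cartan a k i := by
  rw [inner_sub_left, hlam, inner_coroot_eq_cartan]

omit hlam in
lemma eq_of_coroot_pairing {x y : V} (h : ∀ k, ⟪x, coroot (a k)⟫ = ⟪y, coroot (a k)⟫) :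
    x = y := by
  have hka : ∀ k, ⟪x - y, a k⟫ = 0 := by
    intro k
    have h0 : ⟪x - y, coroot (a k)⟫ = 0 := by rw [inner_sub_left, h k, sub_self]
    rw [coroot, real_inner_smul_right] at h0
    have hs : (2:ℝ)/⟪a k, a k⟫ ≠ 0 :=
      div_ne_zero two_ne_zero (inner_self_ne _ (a_ne_zero hΦ ha k))
    exact (mul_eq_zero.mp h0).resolve_left hs
  have hall : ∀ v : V, ⟪x - y, v⟫ = 0 := by
    intro v
    have hv : v ∈ Submodule.span ℝ (Set.range a) := by rw [ha.spans]; exact Submodule.mem_top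
    induction hv using Submodule.span_induction with
    | mem z hz => obtain ⟨k, rfl⟩ := hz; exact hka k
    | zero => exact inner_zero_right _
    | add y z _ _ hy hz => rw [inner_add_right, hy, hz, add_zero]
    | smul c y _ hy => rw [real_inner_smul_right, hy, mul_zero]
  have h2 := hall (x - y)
  rw [inner_self_eq_zero (𝕜 := ℝ)] at h2
  exact sub_eq_zero.mp h2

lemma lam_inj {i j : Fin d} (h : lam i = lam j) : i = j := by
  by_contra hne
  have h1 := hlam i i
  have h2 := hlam j i
  rw [if_pos rfl] at h1
  rw [if_neg (Ne.symm hne)] at h2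
  rw [h] at h1
  exact one_ne_zero (h1.symm.trans h2)

lemma lam_ne_lam_sub (i : Fin d) : lam i ≠ lam i - a i := by
  intro h
  have h2 : lam i - (lam i - a i) = 0 := by rw [← h, sub_self]
  rw [sub_sub_cancel] at h2
  exact a_ne_zero hΦ ha i h2

lemma lam_ne_sub {i j : Fin d} (h : j ≠ i) : lam j ≠ lam i - a i := by
  intro he
  have h1 : ⟪lam j, coroot (a i)⟫ = ⟪lam i - a i, coroot (a i)⟫ := by rw [he]
  rw [hlam, if_neg h, lam_sub_coroot hΦ ha hlam, if_pos rfl, cartan_diag hΦ ha] at h1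
  norm_num at h1

/-- the dominant vector whose stabilizer data matches `L_{w,i}` -/
noncomputable def zvec (a lam : Fin d → V) (i : Fin d) : V :=
  lam i + (lam i - a i) + ∑ j ∈ Nset a i, lam j

lemma zvec_coroot (i k : Fin d) :
    ⟪zvec a lam i, coroot (a k)⟫ = if k ∈ Nset a i then 1 - cartan a k i else 0 := by
  unfold zvec
  rw [inner_add_left, inner_add_left, hlam, lam_sub_coroot hΦ ha hlam, sum_inner,
    Finset.sum_congr rfl (fun j _ => hlam j k),
    Finset.sum_ite_eq' (Nset a i) k (fun _ => (1:ℝ))]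
  by_cases hik : i = k
  · subst hik
    have hN : i ∉ Nset a i := fun hmem => (mem_Nset.mp hmem).1 rfl
    rw [if_neg hN, if_neg hN, cartan_diag hΦ ha]
    norm_num
  · by_cases hk : k ∈ Nset a i
    · rw [if_pos hk, if_pos hk, if_neg hik]
      ring
    · rw [if_neg hk, if_neg hk, if_neg hik, cartan_zero_of_not_mem hΦ ha (fun hh => hik hh.symm) hk]
      ring

omit hΦ ha hlam in
lemma inner_a_coroot_sign (x : V) (k : Fin d) :
    ⟪x, coroot (a k)⟫ = (2/⟪a k, a k⟫) * ⟪x, a k⟫ := by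
  rw [coroot, real_inner_smul_right]

lemma zvec_dominant (i : Fin d) : Dominant a (zvec a lam i) := by
  intro k
  have h := zvec_coroot hΦ ha hlam i k
  rw [inner_a_coroot_sign] at h
  have hs : (0:ℝ) < ⟪a k, a k⟫ := inner_self_pos _ (a_ne_zero hΦ ha k)
  have hrhs : 0 ≤ if k ∈ Nset a i then 1 - cartan a k i else 0 := by
    split_ifs with hk
    · have := cartan_neg_of_mem_Nset hΦ ha hk
      linarith
    · exact le_refl _
  by_contra hneg
  push_neg at hneg
  have hlt : (2/⟪a k, a k⟫) * ⟪zvec a lam i, a k⟫ < 0 :=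
    mul_neg_of_pos_of_neg (div_pos two_pos hs) hneg
  rw [h] at hlt
  linarith

lemma zvec_inner_zero_iff (i k : Fin d) :
    ⟪zvec a lam i, a k⟫ = 0 ↔ k ∉ Nset a i := by
  have h := zvec_coroot hΦ ha hlam i k
  rw [inner_a_coroot_sign] at h
  have hs0 : (2:ℝ)/⟪a k, a k⟫ ≠ 0 :=
    div_ne_zero two_ne_zero (inner_self_ne _ (a_ne_zero hΦ ha k))
  constructor
  · intro ht
    rw [ht, mul_zero] at h
    by_contra hk
    rw [if_pos hk] at h
    have := cartan_neg_of_mem_Nset hΦ ha hk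
    linarith
  · intro hk
    rw [if_neg hk] at h
    exact (mul_eq_zero.mp h).resolve_left hs0


-- ### Section G : analysis of the functionals L_{w,i}

/-- coefficient function of the functional `L_{w,i}` -/
noncomputable def coeffFn (a lam : Fin d → V) (w : V ≃ₗ[ℝ] V) (i : Fin d) (x : V) : ℝ :=
  (if w (lam i) = x then 1 else 0) + (if w (lam i - a i) = x then 1 else 0) +
    ∑ j ∈ Nset a i, (if w (lam j) = x then cartan a j i else 0)

lemma Lfun_apply (w : V ≃ₗ[ℝ] V) (i : Fin d) (h : V → ℝ) :
    Lfun a lam w i h = h (w (lam i)) + h (w (lam i - a i)) -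
      ∑ j ∈ Nset a i, (-(cartan a j i)) * h (w (lam j)) := by
  unfold Lfun
  rw [refl_lam_self hΦ ha hlam]

lemma Lfun_indicator (w : V ≃ₗ[ℝ] V) (i : Fin d) (x : V) :
    Lfun a lam w i (fun v => if v = x then (1:ℝ) else 0) = coeffFn a lam w i x := by
  rw [Lfun_apply hΦ ha hlam]
  unfold coeffFn
  have hsum : ∑ j ∈ Nset a i, (-(cartan a j i)) * (if w (lam j) = x then (1:ℝ) else 0) =
      -∑ j ∈ Nset a i, (if w (lam j) = x then cartan a j i else 0) := by
    rw [← Finset.sum_neg_distrib]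
    exact Finset.sum_congr rfl (fun j _ => by split_ifs <;> ring)
  rw [hsum]
  ring

lemma coeff_of_Lfun_eq {w w' : V ≃ₗ[ℝ] V} {i i' : Fin d}
    (hL : Lfun a lam w i = Lfun a lam w' i') (x : V) :
    coeffFn a lam w i x = coeffFn a lam w' i' x := by
  rw [← Lfun_indicator hΦ ha hlam, ← Lfun_indicator hΦ ha hlam, hL]

lemma coeffFn_p1 (w : V ≃ₗ[ℝ] V) (i : Fin d) : coeffFn a lam w i (w (lam i)) = 1 := by
  unfold coeffFn
  rw [if_pos rfl, if_neg (fun hc => lam_ne_lam_sub hΦ ha hlam i (w.injective hc).symm),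
    Finset.sum_eq_zero (fun j hj => if_neg (fun hc =>
      (mem_Nset.mp hj).1 (lam_inj hΦ ha hlam (w.injective hc)))), add_zero, add_zero]

lemma coeffFn_p2 (w : V ≃ₗ[ℝ] V) (i : Fin d) : coeffFn a lam w i (w (lam i - a i)) = 1 := by
  unfold coeffFn
  rw [if_neg (fun hc => lam_ne_lam_sub hΦ ha hlam i (w.injective hc)),
    if_pos rfl,
    Finset.sum_eq_zero (fun j hj => if_neg (fun hc =>
      lam_ne_sub hΦ ha hlam (mem_Nset.mp hj).1 (w.injective hc))), add_zero, zero_add]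

lemma coeffFn_q (w : V ≃ₗ[ℝ] V) {i j : Fin d} (hj : j ∈ Nset a i) :
    coeffFn a lam w i (w (lam j)) = cartan a j i := by
  have hji : j ≠ i := (mem_Nset.mp hj).1
  unfold coeffFn
  rw [if_neg (fun hc => hji (lam_inj hΦ ha hlam (w.injective hc)).symm),
    if_neg (fun hc => lam_ne_sub hΦ ha hlam hji (w.injective hc).symm),
    Finset.sum_eq_single j
      (fun j' _ hne => if_neg (fun hc => hne (lam_inj hΦ ha hlam (w.injective hc))))
      (fun habs => absurd hj habs),
    if_pos rfl, zero_add, zero_add]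

lemma coeff_pos_cases {w : V ≃ₗ[ℝ] V} {i : Fin d} {x : V}
    (h : 0 < coeffFn a lam w i x) : x = w (lam i) ∨ x = w (lam i - a i) := by
  by_cases h1 : w (lam i) = x
  · exact Or.inl h1.symm
  by_cases h2 : w (lam i - a i) = x
  · exact Or.inr h2.symm
  exfalso
  unfold coeffFn at h
  rw [if_neg h1, if_neg h2] at h
  have hsum : ∑ j ∈ Nset a i, (if w (lam j) = x then cartan a j i else 0) ≤ 0 := by
    refine Finset.sum_nonpos (fun j hj => ?_)
    split_ifs
    · exact le_of_lt (cartan_neg_of_mem_Nset hΦ ha hj)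
    · exact le_refl 0
  linarith

lemma coeff_neg_cases {w : V ≃ₗ[ℝ] V} {i : Fin d} {x : V}
    (h : coeffFn a lam w i x < 0) : ∃ j ∈ Nset a i, x = w (lam j) := by
  by_contra hno
  push_neg at hno
  have hsum0 : ∑ j ∈ Nset a i, (if w (lam j) = x then cartan a j i else 0) = 0 :=
    Finset.sum_eq_zero (fun j hj => if_neg (fun he => hno j hj he.symm))
  unfold coeffFn at h
  rw [hsum0] at h
  have t1 : (0:ℝ) ≤ if w (lam i) = x then 1 else 0 := by split_ifs <;> norm_num
  have t2 : (0:ℝ) ≤ if w (lam i - a i) = x then 1 else 0 := by split_ifs <;> norm_num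
  linarith

/-- forward direction: equal functionals force equal index and parabolic relation -/
lemma Lfun_forward {w w' : V ≃ₗ[ℝ] V} (hw : w ∈ weylGroup Φ) (hw' : w' ∈ weylGroup Φ)
    {i i' : Fin d} (hL : Lfun a lam w i = Lfun a lam w' i') :
    i = i' ∧ w'⁻¹ * w ∈ parabolic a {k | k ∉ Nset a i} := by
  have hcoeff := coeff_of_Lfun_eq hΦ ha hlam hL
  have hii : i = i' := by
    have h1 : 0 < coeffFn a lam w i (w' (lam i')) := by
      rw [hcoeff, coeffFn_p1 hΦ ha hlam]
      norm_num
    rcases coeff_pos_cases hΦ ha hlam h1 with he | he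
    · have hu : (w'⁻¹ * w) ∈ weylGroup Φ := mul_mem (inv_mem hw') hw
      have huapp : (w'⁻¹ * w) (lam i) = lam i' := by
        show w'⁻¹ (w (lam i)) = lam i'
        rw [← he]
        exact w'.symm_apply_apply _
      exact lam_inj hΦ ha hlam (chamber hΦ ha hu (lam_dominant hΦ ha hlam i)
        (lam_dominant hΦ ha hlam i') huapp).1
    · have hu : (w'⁻¹ * (w * sref hΦ ha i)) ∈ weylGroup Φ :=
        mul_mem (inv_mem hw') (mul_mem hw (sref_mem hΦ ha i))
      have huapp : (w'⁻¹ * (w * sref hΦ ha i)) (lam i) = lam i' := by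
        show w'⁻¹ (w (sref hΦ ha i (lam i))) = lam i'
        rw [sref_apply, refl_lam_self hΦ ha hlam, ← he]
        exact w'.symm_apply_apply _
      exact lam_inj hΦ ha hlam (chamber hΦ ha hu (lam_dominant hΦ ha hlam i)
        (lam_dominant hΦ ha hlam i') huapp).1
  subst hii
  refine ⟨rfl, ?_⟩
  have hm1 : w' (lam i) = w (lam i) ∨ w' (lam i) = w (lam i - a i) := by
    refine coeff_pos_cases hΦ ha hlam (x := w' (lam i)) ?_
    rw [hcoeff, coeffFn_p1 hΦ ha hlam]
    norm_num
  have hm2 : w' (lam i - a i) = w (lam i) ∨ w' (lam i - a i) = w (lam i - a i) := by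
    refine coeff_pos_cases hΦ ha hlam (x := w' (lam i - a i)) ?_
    rw [hcoeff, coeffFn_p2 hΦ ha hlam]
    norm_num
  have hne' : w' (lam i) ≠ w' (lam i - a i) :=
    fun hc => lam_ne_lam_sub hΦ ha hlam i (w'.injective hc)
  have hpairsum : w (lam i) + w (lam i - a i) = w' (lam i) + w' (lam i - a i) := by
    rcases hm1 with ha1 | ha1 <;> rcases hm2 with ha2 | ha2
    · exact absurd (ha1.trans ha2.symm) hne'
    · rw [ha1, ha2]
    · rw [ha1, ha2, add_comm]
    · exact absurd (ha1.trans ha2.symm) hne'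
  have hinj : ∀ (wv : V ≃ₗ[ℝ] V), Set.InjOn (fun j => wv (lam j)) (Nset a i) :=
    fun wv j hj j' hj' he => lam_inj hΦ ha hlam (wv.injective he)
  have hsub : (Nset a i).image (fun j => w' (lam j)) ⊆ (Nset a i).image (fun j => w (lam j)) := by
    intro x hx
    obtain ⟨j, hj, rfl⟩ := Finset.mem_image.mp hx
    have hneg : coeffFn a lam w i (w' (lam j)) < 0 := by
      rw [hcoeff, coeffFn_q hΦ ha hlam w' hj]
      exact cartan_neg_of_mem_Nset hΦ ha hj
    obtain ⟨j', hj', he⟩ := coeff_neg_cases hΦ ha hlam hneg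
    exact Finset.mem_image.mpr ⟨j', hj', he.symm⟩
  have hSeq : (Nset a i).image (fun j => w' (lam j)) = (Nset a i).image (fun j => w (lam j)) := by
    refine Finset.eq_of_subset_of_card_le hsub ?_
    rw [Finset.card_image_of_injOn (hinj w), Finset.card_image_of_injOn (hinj w')]
  have hsumN : ∑ j ∈ Nset a i, w (lam j) = ∑ j ∈ Nset a i, w' (lam j) := by
    have e1 : ∑ x ∈ (Nset a i).image (fun j => w (lam j)), x = ∑ j ∈ Nset a i, w (lam j) :=
      Finset.sum_image (fun j hj j' hj' he => hinj w hj hj' he)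
    have e2 : ∑ x ∈ (Nset a i).image (fun j => w' (lam j)), x = ∑ j ∈ Nset a i, w' (lam j) :=
      Finset.sum_image (fun j hj j' hj' he => hinj w' hj hj' he)
    rw [← e1, ← e2, hSeq]
  have hu : (w'⁻¹ * w) ∈ weylGroup Φ := mul_mem (inv_mem hw') hw
  have huz : (w'⁻¹ * w) (zvec a lam i) = zvec a lam i := by
    have hwz : w (zvec a lam i) = w' (zvec a lam i) := by
      unfold zvec
      rw [map_add, map_add, map_sum, map_add, map_add, map_sum, hpairsum, hsumN]
    show w'⁻¹ (w (zvec a lam i)) = zvec a lam i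
    rw [hwz]
    exact w'.symm_apply_apply _
  have hcham := (chamber hΦ ha hu (zvec_dominant hΦ ha hlam i)
    (zvec_dominant hΦ ha hlam i) huz).2
  have hset : {g : V ≃ₗ[ℝ] V | ∃ k, ⟪zvec a lam i, a k⟫ = 0 ∧ IsReflection g (a k)} =
      {g : V ≃ₗ[ℝ] V | ∃ k ∈ {k : Fin d | k ∉ Nset a i}, IsReflection g (a k)} := by
    ext g
    constructor
    · rintro ⟨k, hk0, hkr⟩
      exact ⟨k, (zvec_inner_zero_iff hΦ ha hlam i k).mp hk0, hkr⟩
    · rintro ⟨k, hk0, hkr⟩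
      exact ⟨k, (zvec_inner_zero_iff hΦ ha hlam i k).mpr hk0, hkr⟩
  unfold parabolic
  rw [← hset]
  exact hcham

/-- the fixing property for elements of the parabolic subgroup -/
lemma parabolic_fix {u : V ≃ₗ[ℝ] V} {i : Fin d}
    (hu : u ∈ parabolic a {k | k ∉ Nset a i}) :
    ((u (lam i) = lam i ∧ u (lam i - a i) = lam i - a i) ∨
      (u (lam i) = lam i - a i ∧ u (lam i - a i) = lam i)) ∧
      ∀ j ∈ Nset a i, u (lam j) = lam j := by
  induction hu using Subgroup.closure_induction with
  | one => exact ⟨Or.inl ⟨rfl, rfl⟩, fun j hj => rfl⟩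
  | mul u v hu hv pu pv =>
      refine ⟨?_, fun j hj => by show u (v (lam j)) = lam j; rw [pv.2 j hj, pu.2 j hj]⟩
      rcases pu.1 with ⟨a1, a2⟩ | ⟨a1, a2⟩ <;> rcases pv.1 with ⟨b1, b2⟩ | ⟨b1, b2⟩
      · exact Or.inl ⟨by show u (v _) = _; rw [b1, a1], by show u (v _) = _; rw [b2, a2]⟩
      · exact Or.inr ⟨by show u (v _) = _; rw [b1, a2], by show u (v _) = _; rw [b2, a1]⟩
      · exact Or.inr ⟨by show u (v _) = _; rw [b1, a1], by show u (v _) = _; rw [b2, a2]⟩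
      · exact Or.inl ⟨by show u (v _) = _; rw [b1, a2], by show u (v _) = _; rw [b2, a1]⟩
  | inv u hu pu =>
      refine ⟨?_, fun j hj => (u.symm_apply_eq).mpr (pu.2 j hj).symm⟩
      rcases pu.1 with ⟨a1, a2⟩ | ⟨a1, a2⟩
      · exact Or.inl ⟨(u.symm_apply_eq).mpr a1.symm, (u.symm_apply_eq).mpr a2.symm⟩
      · exact Or.inr ⟨(u.symm_apply_eq).mpr a2.symm, (u.symm_apply_eq).mpr a1.symm⟩
  | mem g hg =>
      obtain ⟨k, hk, hrefl⟩ := hg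
      by_cases hki : k = i
      · subst hki
        refine ⟨Or.inr ⟨?_, ?_⟩, fun j hj => ?_⟩
        · rw [hrefl, refl_lam_self hΦ ha hlam]
        · rw [hrefl, reflFormula_eq_coroot, lam_sub_coroot hΦ ha hlam, if_pos rfl,
            cartan_diag hΦ ha, show (1:ℝ) - 2 = -1 by norm_num, neg_smul, one_smul,
            sub_neg_eq_add, sub_add_cancel]
        · have hjk : j ≠ k := (mem_Nset.mp hj).1
          rw [hrefl, reflFormula_of_inner_zero _ _ (inner_lam_a_ne hΦ ha hlam hjk)]
      · have h2 : ⟪a i, a k⟫ = 0 := by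
          have h3 := cartan_zero_of_not_mem hΦ ha hki hk
          rw [cartan_zero_iff hΦ ha] at h3
          rw [real_inner_comm]
          exact h3
        refine ⟨Or.inl ⟨?_, ?_⟩, fun j hj => ?_⟩
        · rw [hrefl, reflFormula_of_inner_zero _ _ (inner_lam_a_ne hΦ ha hlam (Ne.symm hki))]
        · refine hrefl _ |>.trans (reflFormula_of_inner_zero _ _ ?_)
          rw [inner_sub_left, inner_lam_a_ne hΦ ha hlam (Ne.symm hki), h2, sub_zero]
        · have hjk : j ≠ k := fun he => hk (he ▸ hj)
          rw [hrefl, reflFormula_of_inner_zero _ _ (inner_lam_a_ne hΦ ha hlam hjk)]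

/-- backward direction: multiplying by a parabolic element does not change the functional -/
lemma Lfun_backward (w : V ≃ₗ[ℝ] V) {u : V ≃ₗ[ℝ] V} {i : Fin d}
    (hu : u ∈ parabolic a {k | k ∉ Nset a i}) :
    Lfun a lam (w * u) i = Lfun a lam w i := by
  obtain ⟨hpair, hN⟩ := parabolic_fix hΦ ha hlam hu
  funext h
  rw [Lfun_apply hΦ ha hlam, Lfun_apply hΦ ha hlam]
  have hS : ∑ j ∈ Nset a i, (-(cartan a j i)) * h ((w * u) (lam j)) =
      ∑ j ∈ Nset a i, (-(cartan a j i)) * h (w (lam j)) :=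
    Finset.sum_congr rfl (fun j hj => by
      rw [show (w * u) (lam j) = w (u (lam j)) from rfl, hN j hj])
  rw [hS, show (w * u) (lam i) = w (u (lam i)) from rfl,
    show (w * u) (lam i - a i) = w (u (lam i - a i)) from rfl]
  rcases hpair with ⟨h1, h2⟩ | ⟨h1, h2⟩
  · rw [h1, h2]
  · rw [h1, h2]
    ring

end Dev
set_option maxHeartbeats 1000000 in
/-- **Theorem 7.2 (facet count)**: the number of distinct functionals among the
`L_{w,i}` (i.e. of facets of the Φ-submodular cone) equals `Σ_{i=1}^d |W| / |W_{[d]∖N(i)}|`. -/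
theorem count_facets_of_submodular_cone
    {V : Type*} [NormedAddCommGroup V] [InnerProductSpace ℝ V] [FiniteDimensional ℝ V]
    {Φ : Set V} (hΦ : IsRootSystem Φ) {d : ℕ} {a : Fin d → V} (ha : IsSimpleSystem Φ a)
    {lam : Fin d → V} (hlam : ∀ i j, ⟪lam i, coroot (a j)⟫ = if i = j then (1 : ℝ) else 0) :
    Set.ncard {F : (V → ℝ) → ℝ | ∃ w ∈ weylGroup Φ, ∃ i : Fin d, F = Lfun a lam w i} =
      ∑ i : Fin d,
        Nat.card ↥(weylGroup Φ) / Nat.card ↥(parabolic a {k | k ∉ Nset a i}) := by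
  classical
  haveI hWfin : Finite ↥(weylGroup Φ) := weyl_finite hΦ ha
  have hPle : ∀ i : Fin d, parabolic a {k | k ∉ Nset a i} ≤ weylGroup Φ := by
    intro i
    apply Subgroup.closure_mono
    rintro g ⟨k, _, hr⟩
    exact ⟨a k, ha.mem k, hr⟩
  set Si : Fin d → Set ((V → ℝ) → ℝ) :=
    fun i => {F | ∃ w ∈ weylGroup Φ, F = Lfun a lam w i} with hSi
  have hSirange : ∀ i, Si i = Set.range (fun w : ↥(weylGroup Φ) => Lfun a lam ↑w i) := by
    intro i
    ext F
    constructor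
    · rintro ⟨w, hw, rfl⟩
      exact ⟨⟨w, hw⟩, rfl⟩
    · rintro ⟨⟨w, hw⟩, rfl⟩
      exact ⟨w, hw, rfl⟩
  have hSifin : ∀ i, (Si i).Finite := fun i => by
    rw [hSirange]
    exact Set.finite_range _
  have hT : {F : (V → ℝ) → ℝ | ∃ w ∈ weylGroup Φ, ∃ i : Fin d, F = Lfun a lam w i} =
      ↑(Finset.univ.biUnion (fun i => (hSifin i).toFinset)) := by
    ext F
    constructor
    · rintro ⟨w, hw, i, rfl⟩
      refine Finset.mem_coe.mpr (Finset.mem_biUnion.mpr ⟨i, Finset.mem_univ i, ?_⟩)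
      exact (Set.Finite.mem_toFinset _).mpr ⟨w, hw, rfl⟩
    · intro hF
      obtain ⟨i, -, hFi⟩ := Finset.mem_biUnion.mp (Finset.mem_coe.mp hF)
      obtain ⟨w, hw, rfl⟩ := (Set.Finite.mem_toFinset _).mp hFi
      exact ⟨w, hw, i, rfl⟩
  rw [hT, Set.ncard_coe_finset, Finset.card_biUnion]
  · refine Finset.sum_congr rfl (fun i _ => ?_)
    have h1 : ((hSifin i).toFinset).card = Nat.card ↥(Si i) := by
      rw [Nat.card_coe_set_eq, Set.ncard_eq_toFinset_card _ (hSifin i)]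
    set P' : Subgroup ↥(weylGroup Φ) :=
      (parabolic a {k | k ∉ Nset a i}).subgroupOf (weylGroup Φ) with hP'
    have key1 : ∀ x y : ↥(weylGroup Φ), (QuotientGroup.leftRel P') x y →
        Lfun a lam (↑x) i = Lfun a lam (↑y) i := by
      intro x y hxy
      rw [QuotientGroup.leftRel_apply] at hxy
      have hxy' : ((x⁻¹ * y : ↥(weylGroup Φ)) : V ≃ₗ[ℝ] V) ∈
          parabolic a {k | k ∉ Nset a i} := hxy
      have hb := Lfun_backward hΦ ha hlam (w := (↑x : V ≃ₗ[ℝ] V)) hxy'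
      have hco : ((x : V ≃ₗ[ℝ] V)) * ((x⁻¹ * y : ↥(weylGroup Φ)) : V ≃ₗ[ℝ] V)
          = ((y : V ≃ₗ[ℝ] V)) := by
        have : (x * (x⁻¹ * y) : ↥(weylGroup Φ)) = y := by group
        calc ((x : V ≃ₗ[ℝ] V)) * ((x⁻¹ * y : ↥(weylGroup Φ)) : V ≃ₗ[ℝ] V)
            = ((x * (x⁻¹ * y) : ↥(weylGroup Φ)) : V ≃ₗ[ℝ] V) := rfl
          _ = ((y : V ≃ₗ[ℝ] V)) := by rw [this]
      rw [hco] at hb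
      exact hb.symm
    let f : ↥(weylGroup Φ) ⧸ P' → ↥(Si i) :=
      Quotient.lift (fun w : ↥(weylGroup Φ) =>
          (⟨Lfun a lam ↑w i, ⟨↑w, w.2, rfl⟩⟩ : ↥(Si i)))
        (fun x y hxy => Subtype.ext (key1 x y hxy))
    have hfbij : Function.Bijective f := by
      constructor
      · intro q1 q2
        induction q1 using Quotient.inductionOn with
        | h x =>
        induction q2 using Quotient.inductionOn with
        | h y =>
        intro he
        have hL : Lfun a lam (↑x) i = Lfun a lam (↑y) i := congrArg Subtype.val he
        have hfor := (Lfun_forward hΦ ha hlam x.2 y.2 hL).2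
        have hmem : x⁻¹ * y ∈ P' := by
          show ((x⁻¹ * y : ↥(weylGroup Φ)) : V ≃ₗ[ℝ] V) ∈ parabolic a {k | k ∉ Nset a i}
          have hinv : ((x⁻¹ * y : ↥(weylGroup Φ)) : V ≃ₗ[ℝ] V)
              = ((y : V ≃ₗ[ℝ] V)⁻¹ * (↑x : V ≃ₗ[ℝ] V))⁻¹ := by
            push_cast
            group
          rw [hinv]
          exact inv_mem hfor
        exact Quotient.sound (QuotientGroup.leftRel_apply.mpr hmem)
      · rintro ⟨F, w, hw, rfl⟩
        exact ⟨Quotient.mk _ (⟨w, hw⟩ : ↥(weylGroup Φ)), rfl⟩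
    have h2 : Nat.card ↥(Si i) = Nat.card (↥(weylGroup Φ) ⧸ P') :=
      (Nat.card_congr (Equiv.ofBijective f hfbij)).symm
    have h3 : Nat.card (↥(weylGroup Φ) ⧸ P') = P'.index := (Subgroup.index_eq_card P').symm
    have h4 : Nat.card ↥P' = Nat.card ↥(parabolic a {k | k ∉ Nset a i}) :=
      Nat.card_congr (Subgroup.subgroupOfEquivOfLe (hPle i)).toEquiv
    have h5 : P'.index * Nat.card ↥P' = Nat.card ↥(weylGroup Φ) := Subgroup.index_mul_card P'
    have hpos : 0 < Nat.card ↥P' := Nat.card_pos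
    rw [h1, h2, h3, ← h4, ← h5, Nat.mul_div_cancel _ hpos]
  · intro i _ j _ hij
    rw [Function.onFun, Finset.disjoint_left]
    intro F hFi hFj
    rw [Set.Finite.mem_toFinset] at hFi hFj
    obtain ⟨w, hw, rfl⟩ := hFi
    obtain ⟨w', hw', hE⟩ := hFj
    exact hij (Lfun_forward hΦ ha hlam hw hw' hE).1
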